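/- arXiv:1211.3564 — 2 statements merged into one kernel-verified Lean document; each statement's English description precedes it below -/
import Mathlib

section
/- Let M = ℤ^n (n ≥ 3) with the type A_{n−1} root system R = {eᵢ − eⱼ : i ≠ j} and simple roots Δ = {eᵢ − eᵢ₊₁}. Suppose h is an automorphism of the root datum sending each simple root eᵢ − eᵢ₊₁ to e_{n−i} − e_{n−i+1} and acting trivially on M/⟨R⟩. Then no such h exists unless n = 2; equivalently, for n ≥ 3 there is no automorphism of M permuting R, reversing the Dynkin diagram of Δ, and inducing the identity on M/⟨R⟩. -/
/-- The set of roots of the type `A_{n-1}` root system inside `M = ℤ^n`: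
`R = {eᵢ - eⱼ : i ≠ j}`. -/
def typeARoots (n : ℕ) : Set (Fin n → ℤ) :=
  {v | ∃ i j : Fin n, i ≠ j ∧ v = Pi.single i 1 - Pi.single j 1}

/-- `h` is an automorphism of the type `A_{n-1}` root datum `(M, M^∨, R, R^∨)` on `M = ℤ^n`:
a ℤ-linear automorphism of `M` permuting `R`, whose transpose permutes the coroots. -/
def IsRootDatumAutA (n : ℕ) (h : (Fin n → ℤ) ≃ₗ[ℤ] (Fin n → ℤ)) : Prop :=
  (∀ v ∈ typeARoots n, h v ∈ typeARoots n) ∧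
  (∀ v ∈ typeARoots n, h.symm v ∈ typeARoots n) ∧
  (∀ i j : Fin n, i ≠ j →
    ∃ i' j' : Fin n, i' ≠ j' ∧ ∀ x : Fin n → ℤ, h x i - h x j = x i' - x j')

/-!
The coroot condition makes `h 𝟙` constant and triviality on `M / ⟨R⟩` preserves coordinate
sums, so `h 𝟙 = 𝟙`. Telescoping the diagram reversal gives `h (e₀ - eⱼ) = e_{n-1-j} - e_{n-1}`;
summing over `j` turns `n e₀ - 𝟙` into `𝟙 - n e_{n-1}`, so `n · h(e₀)₀ = 2`, impossible for `n ≥ 3`.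
-/

lemma sum_eq_zero_of_mem_span_typeARoots {n : ℕ} {v : Fin n → ℤ}
    (hv : v ∈ Submodule.span ℤ (typeARoots n)) : ∑ i, v i = 0 := by
  induction hv using Submodule.span_induction with
  | mem v hv =>
    obtain ⟨i, j, -, rfl⟩ := hv
    simp [Finset.sum_sub_distrib]
  | zero => simp
  | add x y _ _ hx hy => simp [Finset.sum_add_distrib, hx, hy]
  | smul a x _ hx => simp [← Finset.mul_sum, hx]

lemma map_one_eq_one_of_coroots {n : ℕ} (f : (Fin n → ℤ) →ₗ[ℤ] (Fin n → ℤ))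
    (hcoroot : ∀ i j : Fin n, i ≠ j →
      ∃ i' j' : Fin n, i' ≠ j' ∧ ∀ x : Fin n → ℤ, f x i - f x j = x i' - x j')
    (hrad : ∀ m : Fin n → ℤ, f m - m ∈ Submodule.span ℤ (typeARoots n)) :
    f 1 = 1 := by
  have hconst : ∀ i j, f 1 i = f 1 j := by
    intro i j
    by_cases hij : i = j
    · rw [hij]
    · obtain ⟨i', j', -, hx⟩ := hcoroot i j hij
      simpa [sub_eq_zero] using hx 1
  have hsum : ∑ i, (f 1 - 1) i = 0 := sum_eq_zero_of_mem_span_typeARoots (hrad 1)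
  funext i
  have hcard : (n : ℤ) ≠ 0 := by exact_mod_cast (Fin.pos i).ne'
  simp only [Pi.sub_apply, Pi.one_apply, fun j => hconst j i, Finset.sum_const,
    Finset.card_univ, Fintype.card_fin, nsmul_eq_mul] at hsum
  simpa [sub_eq_zero] using (mul_eq_zero.mp hsum).resolve_left hcard

section DiagramReversal

variable {m : ℕ} (f : (Fin (m + 1) → ℤ) →ₗ[ℤ] (Fin (m + 1) → ℤ))

/-- `f` sends the simple root `eᵢ - eᵢ₊₁` to `e_{m-1-i} - e_{m-i}`, written with `Fin.rev`. -/
def ReversesSimpleRoots : Prop :=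
  ∀ i : Fin m, f (Pi.single i.castSucc 1 - Pi.single i.succ 1)
    = Pi.single i.succ.rev 1 - Pi.single i.castSucc.rev 1

lemma map_single_zero_sub_single_of_reverses (hrev : ReversesSimpleRoots f) (j : Fin (m + 1)) :
    f (Pi.single 0 1 - Pi.single j 1) = Pi.single j.rev 1 - Pi.single (Fin.last m) 1 := by
  induction j using Fin.induction with
  | zero => simp
  | succ i ih =>
    have hsplit : (Pi.single 0 1 - Pi.single i.succ 1 : Fin (m + 1) → ℤ) =
        (Pi.single 0 1 - Pi.single i.castSucc 1) +
          (Pi.single i.castSucc 1 - Pi.single i.succ 1) := by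
      abel
    rw [hsplit, map_add, ih, hrev]
    abel

lemma succ_dvd_two_of_reverses_of_map_one (hm : 1 ≤ m) (hrev : ReversesSimpleRoots f)
    (hone : f 1 = 1) : (m + 1 : ℤ) ∣ 2 := by
  have hsource : ∑ j, (Pi.single 0 1 - Pi.single j 1 : Fin (m + 1) → ℤ)
      = (m + 1) • Pi.single 0 1 - 1 := by
    rw [Finset.sum_sub_distrib, Finset.sum_const, Finset.card_univ, Fintype.card_fin,
      Finset.univ_sum_single]
    rfl
  have htarget : ∑ j : Fin (m + 1),
      (Pi.single j.rev 1 - Pi.single (Fin.last m) 1 : Fin (m + 1) → ℤ) =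
        1 - (m + 1) • Pi.single (Fin.last m) 1 := by
    have hrev_sum : ∑ j : Fin (m + 1), (Pi.single j.rev 1 : Fin (m + 1) → ℤ) = 1 :=
      (Equiv.sum_comp Fin.revPerm fun j => Pi.single j 1).trans (Finset.univ_sum_single 1)
    rw [Finset.sum_sub_distrib, hrev_sum, Finset.sum_const, Finset.card_univ, Fintype.card_fin]
  have himage : (m + 1) • f (Pi.single 0 1) - f 1 = 1 - (m + 1) • Pi.single (Fin.last m) 1 := by
    rw [← map_nsmul, ← map_sub, ← hsource, map_sum, ← htarget]
    exact Finset.sum_congr rfl fun j _ => map_single_zero_sub_single_of_reverses f hrev j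
  have hlast : (0 : Fin (m + 1)) ≠ Fin.last m := by
    simpa [Fin.ext_iff] using (Nat.one_le_iff_ne_zero.mp hm).symm
  refine ⟨f (Pi.single 0 1) 0, ?_⟩
  rw [hone] at himage
  have hcoord : (m + 1 : ℤ) * f (Pi.single 0 1) 0 - 1 = 1 := by
    simpa [hlast] using congrFun himage 0
  linarith

end DiagramReversal

/-- For `n ≥ 3` there is no automorphism of the type `A_{n-1}` root datum on `ℤ^n`
which reverses the Dynkin diagram of the simple roots (sending the `i`-th simple root
`eᵢ - eᵢ₊₁` (0-indexed `j`: `e_j - e_{j+1}`) to `e_{n-2-j} - e_{n-1-j}`) and induces the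
identity on `M / ⟨R⟩`. -/
theorem stmt1 (n : ℕ) (hn : 3 ≤ n) (h : (Fin n → ℤ) ≃ₗ[ℤ] (Fin n → ℤ))
    (hAut : IsRootDatumAutA n h)
    (hΔrev : ∀ j : ℕ, ∀ hj : j + 1 < n,
      h (Pi.single (⟨j, Nat.lt_of_succ_lt hj⟩ : Fin n) 1 - Pi.single (⟨j + 1, hj⟩ : Fin n) 1)
        = Pi.single (⟨n - 2 - j, by omega⟩ : Fin n) 1
            - Pi.single (⟨n - 1 - j, by omega⟩ : Fin n) 1)
    (hrad : ∀ m : Fin n → ℤ, h m - m ∈ Submodule.span ℤ (typeARoots n)) :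
    False := by
  obtain ⟨m, rfl⟩ : ∃ m, n = m + 1 := ⟨n - 1, by omega⟩
  have hone : h.toLinearMap 1 = 1 := map_one_eq_one_of_coroots h.toLinearMap hAut.2.2 hrad
  have hrev : ReversesSimpleRoots h.toLinearMap := by
    intro i
    convert hΔrev i i.succ.isLt using 3 <;> first | rfl | (ext; simp <;> omega)
  have hdvd := succ_dvd_two_of_reverses_of_map_one h.toLinearMap (by omega) hrev hone
  have := Int.le_of_dvd two_pos hdvd
  omega
end

section
/- Let G be a sheaf of groups on a site, X a sheaf, and F a sheaf with a right G-action and an equivariant morphism p : F → X (G acting trivially on X). If p is an epimorphism of sheaves and the map i : F × G → F ×_X F, (x, h) ↦ (x, xh), is an isomorphism, then F is a G-torsor over X; conversely every G-torsor over X satisfies these two conditions. -/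
open CategoryTheory Opposite

universe w v u

/-- A morphism `p : F ⟶ X` of presheaves of types on a site is *locally surjective*
(an epimorphism of sheaves): every section of `X` is locally in the image of `p`. -/
def LocallySurjective {C : Type u} [Category.{v} C] (J : GrothendieckTopology C)
    {F X : Cᵒᵖ ⥤ Type w} (p : F ⟶ X) : Prop :=
  ∀ (U : C) (x : X.obj (op U)), ∃ S ∈ J U, ∀ (V : C) (g : V ⟶ U), S.arrows g →
    ∃ f : F.obj (op V), p.app (op V) f = X.map g.op x

/-- The sections over `U` of the fibre product `Y ×_X F` of presheaves of types. -/
def PbSec {C : Type u} [Category.{v} C] {Y F X : Cᵒᵖ ⥤ Type w}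
    (q : Y ⟶ X) (p : F ⟶ X) (U : Cᵒᵖ) : Type w :=
  {z : Y.obj U × F.obj U // q.app U z.1 = p.app U z.2}

/-- The restriction maps of the fibre product `Y ×_X F` of presheaves of types. -/
def pbMap {C : Type u} [Category.{v} C] {Y F X : Cᵒᵖ ⥤ Type w}
    (q : Y ⟶ X) (p : F ⟶ X) {U V : Cᵒᵖ} (f : U ⟶ V) (z : PbSec q p U) : PbSec q p V :=
  ⟨(Y.map f z.val.1, F.map f z.val.2), by
    have h1 := NatTrans.naturality_apply q f z.val.1
    have h2 := NatTrans.naturality_apply p f z.val.2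
    have hz : q.app U z.val.1 = p.app U z.val.2 := z.property
    show q.app V (Y.map f z.val.1) = p.app V (F.map f z.val.2)
    rw [h1, h2, hz]⟩

/-!
A trivialization `e` of `Y ×_X F` identifies each fibre of the pullback `G`-equivariantly with
`G`, so `G` acts simply transitively on the fibres of `p` over sections lying in the image of
`q`. Every section of `X` is locally in that image, and simple transitivity is a local property
because `F` and `G` are sheaves (uniqueness by separatedness, existence by gluing the local
translations). Conversely, if `p` is locally surjective and `G` acts simply transitively on its
fibres, then `p` trivializes itself: take `Y = F`, `q = p` and `(a, b) ↦ (a, a⁻¹b)`.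
-/

section

variable {C : Type u} [Category.{v} C] {J : GrothendieckTopology C} {F X Y G : Cᵒᵖ ⥤ Type w}
  {act : ∀ U : Cᵒᵖ, F.obj U → G.obj U → F.obj U}

theorem LocallySurjective.of_surjective_pbSec_fst {p : F ⟶ X} {q : Y ⟶ X}
    (hq : LocallySurjective J q)
    (h : ∀ U : Cᵒᵖ, Function.Surjective fun z : PbSec q p U => z.val.1) :
    LocallySurjective J p := by
  intro U x
  obtain ⟨S, hS, hloc⟩ := hq U x
  refine ⟨S, hS, fun V f hf => ?_⟩
  obtain ⟨y, hy⟩ := hloc V f hf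
  obtain ⟨z, rfl⟩ := h _ y
  exact ⟨z.val.2, z.property ▸ hy⟩

theorem existsUnique_act_of_trivialization [∀ U : Cᵒᵖ, Group (G.obj U)]
    {p : F ⟶ X} {q : Y ⟶ X}
    (hpinv : ∀ (U : Cᵒᵖ) (a : F.obj U) (g : G.obj U), p.app U (act U a g) = p.app U a)
    {U : Cᵒᵖ} (e : PbSec q p U ≃ Y.obj U × G.obj U) (he_fst : ∀ z, (e z).1 = z.val.1)
    (he_act : ∀ (z₁ z₂ : PbSec q p U) (g : G.obj U),
      z₂.val.1 = z₁.val.1 → z₂.val.2 = act U z₁.val.2 g → e z₂ = ((e z₁).1, (e z₁).2 * g))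
    {a b : F.obj U} (y : Y.obj U) (ha : q.app U y = p.app U a) (hab : p.app U a = p.app U b) :
    ∃! g : G.obj U, act U a g = b := by
  let za : PbSec q p U := ⟨(y, a), ha⟩
  let zb : PbSec q p U := ⟨(y, b), ha.trans hab⟩
  refine ⟨(e za).2⁻¹ * (e zb).2, ?_, fun g hg => ?_⟩
  · let zc : PbSec q p U := ⟨(y, act U a ((e za).2⁻¹ * (e zb).2)), ha.trans (hpinv ..).symm⟩
    have hzc : e zc = e zb := by
      rw [he_act za zc _ rfl rfl, mul_inv_cancel_left]
      exact Prod.ext ((he_fst za).trans (he_fst zb).symm) rfl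
    exact congrArg (fun z : PbSec q p U => z.val.2) (e.injective hzc)
  · rw [he_act za zb g rfl hg.symm, inv_mul_cancel_left]

theorem existsUnique_act_of_locally (hF : Presieve.IsSheaf J F) (hG : Presieve.IsSheaf J G)
    (hactnat : ∀ {U V : Cᵒᵖ} (f : U ⟶ V) (a : F.obj U) (g : G.obj U),
      F.map f (act U a g) = act V (F.map f a) (G.map f g))
    {U : C} {a b : F.obj (op U)} {S : Sieve U} (hS : S ∈ J U)
    (hloc : ∀ ⦃V : C⦄ (f : V ⟶ U), S.arrows f →
      ∃! g : G.obj (op V), act (op V) (F.map f.op a) g = F.map f.op b) :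
    ∃! g : G.obj (op U), act (op U) a g = b := by
  have restrict : ∀ {V W : Cᵒᵖ} (f : V ⟶ W) {a' b' : F.obj V} {g : G.obj V},
      act V a' g = b' → act W (F.map f a') (G.map f g) = F.map f b' :=
    fun f _ _ _ h => h ▸ (hactnat f _ _).symm
  choose g hg hg_unique using hloc
  have compatible : Presieve.FamilyOfElements.SieveCompatible (P := G) g := by
    intro V W f f' hf
    refine (hg_unique (f' ≫ f) _ _ ?_).symm
    simpa only [op_comp, Functor.map_comp_apply] using restrict f'.op (hg f hf)
  obtain ⟨t, ht, -⟩ := hG S hS g ((Presieve.compatible_iff_sieveCompatible _).2 compatible)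
  refine ⟨t, ?_, fun g' hg' => ?_⟩
  · exact (hF S hS).isSeparatedFor.ext fun V f hf => by rw [hactnat, ht f hf, hg]
  · exact (hG S hS).isSeparatedFor.ext fun V f hf => by
      rw [ht f hf]
      exact hg_unique f hf _ (restrict f.op hg')

variable {p : F ⟶ X}
  (hst : ∀ (U : Cᵒᵖ) (a b : F.obj U), p.app U a = p.app U b → ∃! g : G.obj U, act U a g = b)

noncomputable def translation {U : Cᵒᵖ} (z : PbSec p p U) : G.obj U :=
  (hst U z.val.1 z.val.2 z.property).exists.choose

theorem act_translation {U : Cᵒᵖ} (z : PbSec p p U) :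
    act U z.val.1 (translation hst z) = z.val.2 :=
  (hst U z.val.1 z.val.2 z.property).exists.choose_spec

theorem eq_translation_of_act {U : Cᵒᵖ} {z : PbSec p p U} {g : G.obj U}
    (h : act U z.val.1 g = z.val.2) : g = translation hst z :=
  (hst U z.val.1 z.val.2 z.property).unique h (act_translation hst z)

theorem translation_pbMap
    (hactnat : ∀ {U V : Cᵒᵖ} (f : U ⟶ V) (a : F.obj U) (g : G.obj U),
      F.map f (act U a g) = act V (F.map f a) (G.map f g))
    {U V : Cᵒᵖ} (f : U ⟶ V) (z : PbSec p p U) :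
    translation hst (pbMap p p f z) = G.map f (translation hst z) :=
  (eq_translation_of_act hst <| by
    show act V (F.map f z.val.1) _ = F.map f z.val.2
    rw [← hactnat, act_translation hst z]).symm

theorem translation_of_act [∀ U : Cᵒᵖ, Mul (G.obj U)]
    (hactmul : ∀ (U : Cᵒᵖ) (a : F.obj U) (g g' : G.obj U),
      act U (act U a g) g' = act U a (g * g'))
    {U : Cᵒᵖ} {z₁ z₂ : PbSec p p U} {g : G.obj U}
    (h₁ : z₂.val.1 = z₁.val.1) (h₂ : z₂.val.2 = act U z₁.val.2 g) :
    translation hst z₂ = translation hst z₁ * g :=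
  (eq_translation_of_act hst <| by rw [h₁, ← hactmul, act_translation hst z₁, h₂]).symm

noncomputable def shearEquiv
    (hpinv : ∀ (U : Cᵒᵖ) (a : F.obj U) (g : G.obj U), p.app U (act U a g) = p.app U a)
    (U : Cᵒᵖ) : PbSec p p U ≃ F.obj U × G.obj U where
  toFun z := (z.val.1, translation hst z)
  invFun w := ⟨(w.1, act U w.1 w.2), (hpinv U w.1 w.2).symm⟩
  left_inv z := Subtype.ext (Prod.ext rfl (act_translation hst z))
  right_inv w :=
    Prod.ext rfl (eq_translation_of_act hst (z := ⟨_, (hpinv U w.1 w.2).symm⟩) rfl).symm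

end

/-- **Torsor criterion** (Demazure–Gabriel III §4 Cor. 1.7; Proposition 0.1 of the
paper).  Let `J` be a Grothendieck topology on `C`, let `F`, `X` be sheaves of types,
`G` a sheaf of groups acting on `F` on the right (compatibly with restriction), and
`p : F ⟶ X` a `G`-invariant morphism.  Then `F` is a `G`-torsor over `X` — i.e. there
exist a sheaf `Y` and a locally surjective (epimorphic) `q : Y ⟶ X` such that the
fibre product `Y ×_X F` is `G`-equivariantly isomorphic over `Y` to the trivial torsor
`Y × G` — if and only if `p` is locally surjective (an epimorphism of sheaves) and the
canonical map `i : F × G → F ×_X F`, `(x, h) ↦ (x, xh)`, is an isomorphism (i.e. `G`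
acts simply transitively on the nonempty fibres of `p`). -/
theorem stmt17 {C : Type u} [Category.{v} C] (J : GrothendieckTopology C)
    (F X G : Cᵒᵖ ⥤ Type w)
    (hF : Presieve.IsSheaf J F) (hX : Presieve.IsSheaf J X) (hG : Presieve.IsSheaf J G)
    [∀ U : Cᵒᵖ, Group (G.obj U)]
    (hGhom : ∀ {U V : Cᵒᵖ} (f : U ⟶ V) (a b : G.obj U),
      G.map f (a * b) = G.map f a * G.map f b)
    (act : ∀ U : Cᵒᵖ, F.obj U → G.obj U → F.obj U)
    (hact1 : ∀ (U : Cᵒᵖ) (a : F.obj U), act U a 1 = a)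
    (hactmul : ∀ (U : Cᵒᵖ) (a : F.obj U) (g g' : G.obj U),
      act U (act U a g) g' = act U a (g * g'))
    (hactnat : ∀ {U V : Cᵒᵖ} (f : U ⟶ V) (a : F.obj U) (g : G.obj U),
      F.map f (act U a g) = act V (F.map f a) (G.map f g))
    (p : F ⟶ X)
    (hpinv : ∀ (U : Cᵒᵖ) (a : F.obj U) (g : G.obj U), p.app U (act U a g) = p.app U a) :
    (∃ (Y : Cᵒᵖ ⥤ Type w) (_ : Presieve.IsSheaf J Y) (q : Y ⟶ X)
        (_ : LocallySurjective J q) (e : ∀ U : Cᵒᵖ, PbSec q p U ≃ Y.obj U × G.obj U),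
      -- `e` is a map over `Y`
      (∀ (U : Cᵒᵖ) (z : PbSec q p U), (e U z).1 = z.val.1) ∧
      -- `e` is natural
      (∀ (U V : Cᵒᵖ) (f : U ⟶ V) (z : PbSec q p U),
        e V (pbMap q p f z) = (Y.map f (e U z).1, G.map f (e U z).2)) ∧
      -- `e` is `G`-equivariant
      (∀ (U : Cᵒᵖ) (z₁ z₂ : PbSec q p U) (g : G.obj U),
        z₂.val.1 = z₁.val.1 → z₂.val.2 = act U z₁.val.2 g →
        e U z₂ = ((e U z₁).1, (e U z₁).2 * g))) ↔
    (LocallySurjective J p ∧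
      ∀ (U : Cᵒᵖ) (a b : F.obj U), p.app U a = p.app U b →
        ∃! g : G.obj U, act U a g = b) := by
  constructor
  · rintro ⟨Y, -, q, hq, e, he_fst, -, he_act⟩
    have hp : LocallySurjective J p := hq.of_surjective_pbSec_fst fun U y =>
      ⟨(e U).symm (y, 1), (he_fst U _).symm.trans (congrArg Prod.fst ((e U).apply_symm_apply _))⟩
    refine ⟨hp, fun U a b hab => ?_⟩
    obtain ⟨S, hS, hloc⟩ := hq U.unop (p.app U a)
    refine existsUnique_act_of_locally hF hG hactnat hS fun V f hf => ?_
    obtain ⟨y, hy⟩ := hloc V f hf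
    refine existsUnique_act_of_trivialization hpinv (e _) (he_fst _) (he_act _) y ?_ ?_
    · rw [hy, NatTrans.naturality_apply]
    · rw [NatTrans.naturality_apply, NatTrans.naturality_apply, hab]
  · rintro ⟨hp, hst⟩
    exact ⟨F, hF, p, hp, shearEquiv hst hpinv, fun _ _ => rfl,
      fun _ _ f z => Prod.ext rfl (translation_pbMap hst hactnat f z),
      fun _ _ _ _ h₁ h₂ => Prod.ext h₁ (translation_of_act hst hactmul h₁ h₂)⟩
end
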